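/- Let A ∈ ℝ^{n×n} be non-diagonal symmetric and Â = (1/N) Σ_{k=1}^N A w_k w_k^T with independent Rademacher vectors w_k. Then for each index i and every t > 0, P[|Â_{ii} − a_{ii}| ≥ t] ≤ 2·exp(−N t² / (2(‖a_i‖₂² − a_{ii}²))), where a_i is the i-th row of A. -/

import Mathlib

open MeasureTheory ProbabilityTheory

/-- The distribution of a Rademacher random variable: `±1` with probability `1/2` each. -/
noncomputable def rademacherMeasure : Measure ℝ :=
  (2⁻¹ : ENNReal) • Measure.dirac (1 : ℝ) + (2⁻¹ : ENNReal) • Measure.dirac (-1 : ℝ)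

/-!
Since `w_{ki} = ±1`, `N (Â_{ii} - a_{ii}) = ∑ₖ Xₖ` with `Xₖ = w_{ki} ∑_{j ≠ i} a_{ij} w_{kj}`.
By Hoeffding's lemma `∑_{j ≠ i} a_{ij} w_{kj}` is sub-Gaussian with variance proxy
`σ² = ∑_{j ≠ i} a_{ij}²`, and multiplying it by the independent sign `w_{ki}` keeps this bound:
`E exp(λ w Y)` is a convex combination of the moment generating functions of `Y` at `±λ`.
The `Xₖ` are independent (they depend on disjoint rows of `w`), so Hoeffding's inequality
bounds each tail of `∑ₖ Xₖ` at `N t` by `exp(-(N t)² / (2 N σ²))`.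
-/

open Real
open scoped NNReal

instance : IsProbabilityMeasure rademacherMeasure := by
  constructor
  simp [rademacherMeasure]
  rw [← two_mul, ENNReal.mul_inv_cancel] <;> norm_num

lemma ae_rademacherMeasure : ∀ᵐ x ∂rademacherMeasure, x = 1 ∨ x = -1 := by
  simp [rademacherMeasure, ae_add_measure_iff]

lemma integral_id_rademacherMeasure : ∫ x, x ∂rademacherMeasure = 0 := by
  rw [rademacherMeasure, integral_add_measure, integral_smul_measure, integral_smul_measure]
  · simp
  all_goals exact (integrable_dirac (by simp)).smul_measure (by norm_num)

lemma hasSubgaussianMGF_id_rademacherMeasure : HasSubgaussianMGF id 1 rademacherMeasure := by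
  have := hasSubgaussianMGF_of_mem_Icc_of_integral_eq_zero (μ := rademacherMeasure) (X := id)
    (a := -1) (b := 1) aemeasurable_id ?_ integral_id_rademacherMeasure
  · convert this
    ext; norm_num
  · filter_upwards [ae_rademacherMeasure] with x hx
    rcases hx with rfl | rfl <;> norm_num

lemma hasSubgaussianMGF_of_map_eq_rademacherMeasure {Ω : Type*} [MeasurableSpace Ω]
    {μ : Measure Ω} {w : Ω → ℝ} (hw : AEMeasurable w μ) (hdist : μ.map w = rademacherMeasure) :
    HasSubgaussianMGF w 1 μ :=
  (HasSubgaussianMGF.id_map_iff hw).1 (hdist ▸ hasSubgaussianMGF_id_rademacherMeasure)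

lemma ae_eq_one_or_neg_one_of_map_eq_rademacherMeasure {Ω : Type*} [MeasurableSpace Ω]
    {μ : Measure Ω} {w : Ω → ℝ} (hw : AEMeasurable w μ) (hdist : μ.map w = rademacherMeasure) :
    ∀ᵐ ω ∂μ, w ω = 1 ∨ w ω = -1 :=
  ae_of_ae_map hw (hdist ▸ ae_rademacherMeasure)

namespace ProbabilityTheory

lemma iIndepFun.curry {Ω ι κ β : Type*} [MeasurableSpace Ω] [MeasurableSpace β]
    {μ : Measure Ω} {X : ι → κ → Ω → β} (hX : ∀ i j, Measurable (X i j))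
    (h : iIndepFun (fun p : ι × κ => X p.1 p.2) μ) :
    iIndepFun (fun i ω => (X i · ω)) μ := by
  have := h.isProbabilityMeasure
  have : ∀ i j, IsProbabilityMeasure (μ.map (X i j)) :=
    fun i j => Measure.isProbabilityMeasure_map (hX i j).aemeasurable
  have hblock (i : ι) : μ.map (fun ω => (X i · ω)) = Measure.infinitePi fun j => μ.map (X i j) :=
    (h.precomp (Prod.mk_right_injective i)).map_fun_eq_infinitePi_map (hX i)
  have hjoint : μ.map (fun ω (p : ι × κ) => X p.1 p.2 ω)
      = Measure.infinitePi fun p : ι × κ => μ.map (X p.1 p.2) :=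
    h.map_fun_eq_infinitePi_map fun p => hX p.1 p.2
  rw [iIndepFun_iff_map_fun_eq_infinitePi_map (fun i => by fun_prop)]
  simp_rw [hblock]
  rw [← Measure.infinitePi_map_curry, ← hjoint, Measure.map_map (by fun_prop) (by fun_prop)]
  rfl

namespace HasSubgaussianMGF

lemma sign_mul_of_indepFun {Ω : Type*} [MeasurableSpace Ω] {μ : Measure Ω}
    [IsProbabilityMeasure μ] {ε Y : Ω → ℝ} {c : ℝ≥0} (hY : HasSubgaussianMGF Y c μ)
    (hεm : AEMeasurable ε μ) (hε : ∀ᵐ ω ∂μ, ε ω = 1 ∨ ε ω = -1) (hind : IndepFun ε Y μ) :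
    HasSubgaussianMGF (fun ω => ε ω * Y ω) c μ := by
  -- `sel b` is almost surely the indicator of `{ε = b}`, for `b = ±1`
  set sel : ℝ → Ω → ℝ := fun b ω => (1 + b * ε ω) / 2
  have hsel_int (b : ℝ) : Integrable (sel b) μ :=
    ((integrable_const 1).add ((Integrable.of_mem_Icc (-1) 1 hεm (by
      filter_upwards [hε] with ω hω
      rcases hω with h | h <;> simp [h])).const_mul b)).div_const 2
  have hsel_nonneg (b : ℝ) (hb : b = 1 ∨ b = -1) : 0 ≤ μ[sel b] := by
    refine integral_nonneg_of_ae ?_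
    filter_upwards [hε] with ω hω
    rcases hb with rfl | rfl <;> rcases hω with h | h <;> simp [sel, h]
  have hsel_sum : μ[sel 1] + μ[sel (-1)] = 1 := by
    rw [← integral_add (hsel_int 1) (hsel_int (-1))]
    simp only [sel]
    ring_nf
    simp
  have hsel_indep (b s : ℝ) : IndepFun (sel b) (fun ω => exp (s * Y ω)) μ :=
    hind.comp (φ := fun x => (1 + b * x) / 2) (ψ := fun y => exp (s * y))
      (by fun_prop) (by fun_prop)
  have hprod_int (b s : ℝ) : Integrable (fun ω => sel b ω * exp (s * Y ω)) μ :=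
    (hsel_indep b s).integrable_mul (hsel_int b) (hY.integrable_exp_mul s)
  have hprod_integral (b s : ℝ) :
      ∫ ω, sel b ω * exp (s * Y ω) ∂μ = μ[sel b] * mgf Y μ s :=
    (hsel_indep b s).integral_fun_mul_eq_mul_integral (hsel_int b).1
      (hY.integrable_exp_mul s).1
  have hdecomp (t : ℝ) : (fun ω => exp (t * (ε ω * Y ω))) =ᵐ[μ]
      fun ω => sel 1 ω * exp (t * Y ω) + sel (-1) ω * exp (-t * Y ω) := by
    filter_upwards [hε] with ω hω
    rcases hω with h | h <;> simp [sel, h]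
  refine ⟨fun t => ((hprod_int 1 t).add (hprod_int (-1) (-t))).congr (hdecomp t).symm,
    fun t => ?_⟩
  calc mgf (fun ω => ε ω * Y ω) μ t
      = μ[sel 1] * mgf Y μ t + μ[sel (-1)] * mgf Y μ (-t) := by
        rw [mgf, integral_congr_ae (hdecomp t), integral_add (hprod_int 1 t)
          (hprod_int (-1) (-t)), hprod_integral, hprod_integral]
    _ ≤ μ[sel 1] * exp (c * t ^ 2 / 2) + μ[sel (-1)] * exp (c * t ^ 2 / 2) := by
        gcongr
        · exact hsel_nonneg 1 (.inl rfl)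
        · exact hY.mgf_le t
        · exact hsel_nonneg (-1) (.inr rfl)
        · simpa using hY.mgf_le (-t)
    _ = exp (c * t ^ 2 / 2) := by rw [← add_mul, hsel_sum, one_mul]

lemma measureReal_abs_ge_le {Ω : Type*} [MeasurableSpace Ω]
    {μ : Measure Ω} [IsFiniteMeasure μ] {X : Ω → ℝ} {c : ℝ≥0} (h : HasSubgaussianMGF X c μ)
    {ε : ℝ} (hε : 0 ≤ ε) :
    μ.real {ω | ε ≤ |X ω|} ≤ 2 * exp (-ε ^ 2 / (2 * c)) := by
  have hsplit : {ω | ε ≤ |X ω|} = {ω | ε ≤ X ω} ∪ {ω | ε ≤ (-X) ω} := by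
    ext ω; simp [le_abs]
  calc μ.real {ω | ε ≤ |X ω|}
      ≤ μ.real {ω | ε ≤ X ω} + μ.real {ω | ε ≤ (-X) ω} := hsplit ▸ measureReal_union_le _ _
    _ ≤ exp (-ε ^ 2 / (2 * c)) + exp (-ε ^ 2 / (2 * c)) :=
        add_le_add (h.measure_ge_le hε) (h.neg.measure_ge_le hε)
    _ = 2 * exp (-ε ^ 2 / (2 * c)) := by ring

end HasSubgaussianMGF

end ProbabilityTheory

lemma hasSubgaussianMGF_rademacher_mul_sum {Ω ι : Type*} [MeasurableSpace Ω] {μ : Measure Ω}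
    [IsProbabilityMeasure μ] {w : ι → Ω → ℝ} (hw : ∀ j, Measurable (w j))
    (hdist : ∀ j, μ.map (w j) = rademacherMeasure) (hind : iIndepFun w μ)
    (a : ι → ℝ) {i : ι} {s : Finset ι} (hi : i ∉ s) :
    HasSubgaussianMGF (fun ω => w i ω * ∑ j ∈ s, a j * w j ω) (∑ j ∈ s, ‖a j‖₊ ^ 2) μ := by
  have hsum : HasSubgaussianMGF (fun ω => ∑ j ∈ s, a j * w j ω) (∑ j ∈ s, ‖a j‖₊ ^ 2) μ := by
    convert HasSubgaussianMGF.sum_of_iIndepFun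
      (hind.comp (fun j x => a j * x) fun j => by fun_prop) fun j _ =>
        (hasSubgaussianMGF_of_map_eq_rademacherMeasure (hw j).aemeasurable (hdist j)).const_mul
          (a j) using 2 with j
    · simp
    · -- `const_mul` states its parameter as the subtype element `⟨a j ^ 2, _⟩ * 1`
      rename_i j _
      ext
      change _ = a j ^ 2 * 1
      simp
  have hindep : IndepFun (w i) (fun ω => ∑ j ∈ s, a j * w j ω) μ := by
    have hφ : Measurable fun v : ({i} : Finset ι) → ℝ => v ⟨i, Finset.mem_singleton_self i⟩ :=
      measurable_pi_apply _
    have hψ : Measurable fun v : s → ℝ => ∑ j : s, a j * v j := by fun_prop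
    have := (hind.indepFun_finset {i} s (Finset.disjoint_singleton_left.2 hi) hw).comp hφ hψ
    convert this using 1
    · rfl
    funext ω
    exact (Finset.sum_coe_sort s fun j => a j * w j ω).symm
  exact hsum.sign_mul_of_indepFun (hw i).aemeasurable
    (ae_eq_one_or_neg_one_of_map_eq_rademacherMeasure (hw i).aemeasurable (hdist i)) hindep

lemma measureReal_abs_sum_rademacher_mul_sum_ge_le {Ω κ ι : Type*} [MeasurableSpace Ω]
    {μ : Measure Ω} [IsProbabilityMeasure μ] [Fintype κ] {w : κ → ι → Ω → ℝ}
    (hw : ∀ k j, Measurable (w k j)) (hdist : ∀ k j, μ.map (w k j) = rademacherMeasure)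
    (hind : iIndepFun (fun p : κ × ι => w p.1 p.2) μ) (a : ι → ℝ) {i : ι} {s : Finset ι}
    (hi : i ∉ s) {ε : ℝ} (hε : 0 ≤ ε) :
    μ.real {ω | ε ≤ |∑ k, w k i ω * ∑ j ∈ s, a j * w k j ω|}
      ≤ 2 * exp (-ε ^ 2 / (2 * (Fintype.card κ * ∑ j ∈ s, a j ^ 2))) := by
  have hX_indep : iIndepFun (fun k ω => w k i ω * ∑ j ∈ s, a j * w k j ω) μ :=
    (hind.curry hw).comp (fun _ v => v i * ∑ j ∈ s, a j * v j) fun _ => by fun_prop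
  have hX_subG (k : κ) :=
    hasSubgaussianMGF_rademacher_mul_sum (hw k) (hdist k)
      (hind.precomp (g := Prod.mk k) (Prod.mk_right_injective k)) a hi
  convert (HasSubgaussianMGF.sum_of_iIndepFun hX_indep (s := Finset.univ)
    fun k _ => hX_subG k).measureReal_abs_ge_le hε using 6
  simp

lemma sum_mul_sub_eq_mul_sum_erase {ι : Type*} [Fintype ι] [DecidableEq ι] (a x : ι → ℝ)
    {i : ι} (hx : x i = 1 ∨ x i = -1) :
    (∑ j, a j * x j) * x i - a i = x i * ∑ j ∈ Finset.univ.erase i, a j * x j := by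
  rw [← Finset.add_sum_erase _ _ (Finset.mem_univ i)]
  rcases hx with h | h <;> rw [h] <;> ring

lemma inv_mul_sum_sub_eq_inv_mul_sum_erase {ι : Type*} [Fintype ι] [DecidableEq ι] {N : ℕ}
    (hN : N ≠ 0) (a : ι → ℝ) (x : Fin N → ι → ℝ) {i : ι} (hx : ∀ k, x k i = 1 ∨ x k i = -1) :
    (N : ℝ)⁻¹ * (∑ k, (∑ j, a j * x k j) * x k i) - a i
      = (N : ℝ)⁻¹ * ∑ k, x k i * ∑ j ∈ Finset.univ.erase i, a j * x k j := by
  simp only [← sum_mul_sub_eq_mul_sum_erase a (x _) (hx _), Finset.sum_sub_distrib,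
    Finset.sum_const, Finset.card_univ, Fintype.card_fin, nsmul_eq_mul]
  field_simp

theorem rademacher_componentwise_tail_general {Ω : Type*} [MeasurableSpace Ω]
    (μ : Measure Ω) [IsProbabilityMeasure μ] {n N : ℕ} (hN : 0 < N)
    (A : Matrix (Fin n) (Fin n) ℝ)
    (w : Fin N → Fin n → Ω → ℝ)
    (hmeas : ∀ k i, Measurable (w k i))
    (hdist : ∀ k i, Measure.map (w k i) μ = rademacherMeasure)
    (hindep : iIndepFun
      (fun p : Fin N × Fin n => w p.1 p.2) μ)
    (i : Fin n) (t : ℝ) (ht : 0 < t) :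
    μ {ω | t ≤ |(N : ℝ)⁻¹ * (∑ k, (∑ j, A i j * w k j ω) * w k i ω) - A i i|}
      ≤ ENNReal.ofReal (2 * Real.exp (-((N : ℝ) * t^2)
          / (2 * ((∑ j, (A i j)^2) - (A i i)^2)))) := by
  have hN' : (0 : ℝ) < N := Nat.cast_pos.2 hN
  have hsigns : ∀ᵐ ω ∂μ, ∀ k, w k i ω = 1 ∨ w k i ω = -1 :=
    ae_all_iff.2 fun k =>
      ae_eq_one_or_neg_one_of_map_eq_rademacherMeasure (hmeas k i).aemeasurable (hdist k i)
  have hevent : {ω | t ≤ |(N : ℝ)⁻¹ * (∑ k, (∑ j, A i j * w k j ω) * w k i ω) - A i i|}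
      =ᵐ[μ] {ω | N * t ≤ |∑ k, w k i ω * ∑ j ∈ Finset.univ.erase i, A i j * w k j ω|} := by
    filter_upwards [hsigns] with ω hω
    change (t ≤ _) = (N * t ≤ _)
    rw [inv_mul_sum_sub_eq_inv_mul_sum_erase hN.ne' (A i) (w · · ω) hω, abs_mul, abs_inv,
      Nat.abs_cast, le_inv_mul_iff₀ hN']
  have hσ : ∑ j ∈ Finset.univ.erase i, A i j ^ 2 = (∑ j, (A i j)^2) - (A i i)^2 := by
    rw [← Finset.add_sum_erase _ _ (Finset.mem_univ i)]
    ring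
  rw [measure_congr hevent, ← ofReal_measureReal]
  refine ENNReal.ofReal_le_ofReal ((measureReal_abs_sum_rademacher_mul_sum_ge_le hmeas hdist
    hindep (A i) (Finset.notMem_erase i _) (mul_pos hN' ht).le).trans_eq ?_)
  rw [Fintype.card_fin, hσ, mul_left_comm 2 (N : ℝ),
    show -((N : ℝ) * t) ^ 2 = N * -(N * t ^ 2) by ring, mul_div_mul_left _ _ hN'.ne']

/-- Componentwise tail bound for the Rademacher Monte Carlo diagonal estimator:
`P[|Â_{ii} - a_{ii}| ≥ t] ≤ 2 exp(-N t² / (2(‖a_i‖₂² - a_{ii}²)))`. -/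
theorem rademacher_componentwise_tail {Ω : Type*} [MeasurableSpace Ω]
    (μ : Measure Ω) [IsProbabilityMeasure μ] {n N : ℕ} (hN : 0 < N)
    (A : Matrix (Fin n) (Fin n) ℝ) (hsym : A.IsSymm)
    (hnd : ∃ i j, i ≠ j ∧ A i j ≠ 0)
    (w : Fin N → Fin n → Ω → ℝ)
    (hmeas : ∀ k i, Measurable (w k i))
    (hdist : ∀ k i, Measure.map (w k i) μ = rademacherMeasure)
    (hindep : iIndepFun
      (fun p : Fin N × Fin n => w p.1 p.2) μ)
    (i : Fin n) (t : ℝ) (ht : 0 < t) :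
    μ {ω | t ≤ |(N : ℝ)⁻¹ * (∑ k, (∑ j, A i j * w k j ω) * w k i ω) - A i i|}
      ≤ ENNReal.ofReal (2 * Real.exp (-((N : ℝ) * t^2)
          / (2 * ((∑ j, (A i j)^2) - (A i i)^2)))) :=
  rademacher_componentwise_tail_general μ hN A w hmeas hdist hindep i t ht
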